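/- arXiv:1104.5324 — 4 statements merged into one kernel-verified Lean document; each statement's English description precedes it below -/
import Mathlib

section
/- Let A ⊆ (Fin (k+1) → ℤ), let l ∈ ℤ, and set A_l = {b ∈ A : b (Fin.last k) ≤ l}. Write p(v) = v ∘ Fin.castSucc and v_last = v (Fin.last k). Suppose a ∈ A_l satisfies: (i) p(a) is Pareto-minimal in p(A_l) = {p(b) : b ∈ A_l}, and (ii) a_last ≤ b_last for every b ∈ A_l with p(b) = p(a). Then a is Pareto-minimal in the full set A (not merely in A_l). -/
/-!
An element of `A` below `a` still satisfies the bound `l` on the last objective, so it lies in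
`A_l`; hence it suffices that `a` be minimal in `A_l`. There, any `b ≤ a` has `p(b) ≤ p(a)`, so
`p(b) = p(a)` by (i), and then `a_last ≤ b_last` by (ii), which gives `a ≤ b`.
-/

def paretoMin {k : ℕ} (A : Set (Fin k → ℤ)) : Set (Fin k → ℤ) :=
  {a ∈ A | ∀ b ∈ A, ¬ b < a}

theorem mem_paretoMin_iff_minimal {k : ℕ} {A : Set (Fin k → ℤ)} {a : Fin k → ℤ} :
    a ∈ paretoMin A ↔ Minimal (· ∈ A) a := by
  rw [minimal_iff_forall_lt]
  exact ⟨fun ⟨haA, ha⟩ ↦ ⟨haA, fun b hba hbA ↦ ha b hbA hba⟩,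
    fun ⟨haA, ha⟩ ↦ ⟨haA, fun b hbA hba ↦ ha hba hbA⟩⟩

theorem Minimal.of_forall_le_imp {α : Type*} [LE α] {P Q : α → Prop} {x : α}
    (h : Minimal P x) (hQx : Q x) (hQP : ∀ y, Q y → y ≤ x → P y) : Minimal Q x :=
  ⟨hQx, fun y hQy hyx ↦ h.le_of_le (hQP y hQy hyx) hyx⟩

namespace Fin

variable {α : Type*} {n : ℕ}

theorem le_iff_comp_castSucc_le_and_last_le [LE α] {a b : Fin (n + 1) → α} :
    a ≤ b ↔ a ∘ castSucc ≤ b ∘ castSucc ∧ a (last n) ≤ b (last n) :=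
  forall_fin_succ'

theorem minimal_of_minimal_comp_castSucc [PartialOrder α] {S : Set (Fin (n + 1) → α)}
    {a : Fin (n + 1) → α} (ha : a ∈ S)
    (hinit : Minimal (· ∈ (· ∘ castSucc) '' S) (a ∘ castSucc))
    (hlast : ∀ b ∈ S, b ∘ castSucc = a ∘ castSucc → a (last n) ≤ b (last n)) :
    Minimal (· ∈ S) a := by
  refine ⟨ha, fun b hbS hba ↦ ?_⟩
  have hinit_le := (le_iff_comp_castSucc_le_and_last_le.mp hba).1
  have hinit_eq : b ∘ castSucc = a ∘ castSucc :=
    le_antisymm hinit_le (hinit.le_of_le ⟨b, hbS, rfl⟩ hinit_le)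
  exact le_iff_comp_castSucc_le_and_last_le.mpr ⟨hinit_eq.ge, hlast b hbS hinit_eq⟩

end Fin

/-- For any value of the bound `l`, each solution of the CLMOIP problem (whose projection
to the first `k` coordinates is Pareto-minimal in the projected image of
`A_l = {b ∈ A | b (Fin.last k) ≤ l}`, and which minimizes the last coordinate among all
elements of `A_l` with the same projection) is Pareto-minimal in the full set `A`, not
merely in `A_l`. -/
theorem clmoip_constrained_paretoMin {k : ℕ} (A : Set (Fin (k + 1) → ℤ)) (l : ℤ)
    (a : Fin (k + 1) → ℤ)
    (ha : a ∈ {b ∈ A | b (Fin.last k) ≤ l})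
    (h1 : (a ∘ Fin.castSucc) ∈
      paretoMin ((fun v : Fin (k + 1) → ℤ => v ∘ Fin.castSucc) ''
        {b ∈ A | b (Fin.last k) ≤ l}))
    (h2 : ∀ b ∈ {b ∈ A | b (Fin.last k) ≤ l},
      b ∘ Fin.castSucc = a ∘ Fin.castSucc → a (Fin.last k) ≤ b (Fin.last k)) :
    a ∈ paretoMin A := by
  rw [mem_paretoMin_iff_minimal] at h1 ⊢
  have hmin_bounded := Fin.minimal_of_minimal_comp_castSucc ha h1 h2
  exact hmin_bounded.of_forall_le_imp ha.1 fun b hbA hba ↦ ⟨hbA, (hba _).trans ha.2⟩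
end

section
/- Let A ⊆ (Fin (k+1) → ℤ) and a ∈ A. Write p(v) = v ∘ Fin.castSucc, v_last = v (Fin.last k), and A_{a} = {b ∈ A : b_last ≤ a_last}. Then a is Pareto-minimal in A if and only if both: (i) p(a) is Pareto-minimal in p(A_a) = {p(b) : b ∈ A_a}, and (ii) a_last ≤ b_last for every b ∈ A_a with p(b) = p(a). In other words, the nondominated vectors of A are exactly the vectors recovered by solving the CLMOIP problem with bound l taken equal to their own last objective value. -/
theorem minimal_iff_minimal_image_and_forall_fiber {X P Q : Type*} [Preorder X]
    [PartialOrder P] [Preorder Q] (p : X → P) (l : X → Q)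
    (hle : ∀ x y, x ≤ y ↔ p x ≤ p y ∧ l x ≤ l y) {A : Set X} {a : X} (ha : a ∈ A) :
    Minimal (· ∈ A) a ↔
      Minimal (· ∈ p '' {b ∈ A | l b ≤ l a}) (p a) ∧
        ∀ b ∈ {b ∈ A | l b ≤ l a}, p b = p a → l a ≤ l b := by
  constructor
  · intro hmin
    refine ⟨⟨⟨a, ⟨ha, le_rfl⟩, rfl⟩, ?_⟩, ?_⟩
    · rintro _ ⟨b, ⟨hbA, hbl⟩, rfl⟩ hba
      exact ((hle a b).1 (hmin.2 hbA ((hle b a).2 ⟨hba, hbl⟩))).1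
    · rintro b ⟨hbA, hbl⟩ hpb
      exact ((hle a b).1 (hmin.2 hbA ((hle b a).2 ⟨hpb.le, hbl⟩))).2
  · rintro ⟨hpmin, hfiber⟩
    refine ⟨ha, fun b hbA hba => ?_⟩
    obtain ⟨hpba, hlba⟩ := (hle b a).1 hba
    have hpb : p b = p a := hpba.antisymm (hpmin.2 ⟨b, ⟨hbA, hlba⟩, rfl⟩ hpba)
    exact (hle a b).2 ⟨hpb.ge, hfiber b ⟨hbA, hlba⟩ hpb⟩

theorem Fin.le_iff_castSucc_le_and_last_le {α : Type*} [LE α] {k : ℕ} (x y : Fin (k + 1) → α) :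
    x ≤ y ↔ x ∘ Fin.castSucc ≤ y ∘ Fin.castSucc ∧ x (Fin.last k) ≤ y (Fin.last k) :=
  Fin.forall_fin_succ'

/-- Correctness characterization for the recursive algorithm: `a ∈ A` is Pareto-minimal in
`A` if and only if, setting `A_a = {b ∈ A | b (Fin.last k) ≤ a (Fin.last k)}`, the
projection of `a` to the first `k` coordinates is Pareto-minimal in the projected image of
`A_a`, and `a` minimizes the last coordinate among all `b ∈ A_a` with the same projection.
That is, the nondominated vectors of `A` are exactly the vectors recovered by solving the
CLMOIP problem with bound `l` equal to their own last objective value. -/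
theorem paretoMin_iff_clmoip {k : ℕ} (A : Set (Fin (k + 1) → ℤ))
    (a : Fin (k + 1) → ℤ) (ha : a ∈ A) :
    a ∈ paretoMin A ↔
      ((a ∘ Fin.castSucc) ∈
        paretoMin ((fun v : Fin (k + 1) → ℤ => v ∘ Fin.castSucc) ''
          {b ∈ A | b (Fin.last k) ≤ a (Fin.last k)}) ∧
      ∀ b ∈ {b ∈ A | b (Fin.last k) ≤ a (Fin.last k)},
        b ∘ Fin.castSucc = a ∘ Fin.castSucc → a (Fin.last k) ≤ b (Fin.last k)) := by
  rw [mem_paretoMin_iff_minimal, mem_paretoMin_iff_minimal]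
  exact minimal_iff_minimal_image_and_forall_fiber _ _ Fin.le_iff_castSucc_le_and_last_le ha
end

section
/- Let A ⊆ (Fin (k+1) → ℤ) be finite, let l ∈ ℤ, and set A_l = {b ∈ A : b (Fin.last k) ≤ l}. Write p(v) = v ∘ Fin.castSucc and v_last = v (Fin.last k). Define the CLMOIP solution set S = {a ∈ A_l : p(a) is Pareto-minimal in p(A_l) and a_last ≤ b_last for every b ∈ A_l with p(b) = p(a)}. Let M ∈ ℤ satisfy s_last ≤ M for every s ∈ S. Then every Pareto-minimal element v of A with M ≤ v_last ≤ l belongs to S. -/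
/-- The CLMOIP solution set with bound `l`: those `a` in `A_l = {b ∈ A | b_last ≤ l}` whose
projection to the first `k` coordinates is Pareto-minimal in the projected image of `A_l`,
and which minimize the last coordinate among all elements of `A_l` with the same
projection. -/
def clmoipSol {k : ℕ} (A : Set (Fin (k + 1) → ℤ)) (l : ℤ) : Set (Fin (k + 1) → ℤ) :=
  {a ∈ {b ∈ A | b (Fin.last k) ≤ l} |
    (a ∘ Fin.castSucc) ∈
      paretoMin ((fun v : Fin (k + 1) → ℤ => v ∘ Fin.castSucc) ''
        {b ∈ A | b (Fin.last k) ≤ l}) ∧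
    ∀ b ∈ {b ∈ A | b (Fin.last k) ≤ l},
      b ∘ Fin.castSucc = a ∘ Fin.castSucc → a (Fin.last k) ≤ b (Fin.last k)}

theorem le_of_comp_castSucc_le_of_last_le {n : ℕ} {α : Type*} [LE α] {u w : Fin (n + 1) → α}
    (hinit : u ∘ Fin.castSucc ≤ w ∘ Fin.castSucc) (hlast : u (Fin.last n) ≤ w (Fin.last n)) :
    u ≤ w :=
  fun i => Fin.lastCases hlast (fun j => hinit j) i

theorem exists_mem_clmoipSol_le {k : ℕ} {A : Set (Fin (k + 1) → ℤ)} (hA : A.Finite) {l : ℤ}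
    {b : Fin (k + 1) → ℤ} (hb : b ∈ A) (hbl : b (Fin.last k) ≤ l) :
    ∃ s ∈ clmoipSol A l, s ∘ Fin.castSucc ≤ b ∘ Fin.castSucc ∧
      (s ∘ Fin.castSucc = b ∘ Fin.castSucc → s (Fin.last k) ≤ b (Fin.last k)) := by
  set Al := {c ∈ A | c (Fin.last k) ≤ l}
  have hAl : Al.Finite := hA.subset fun _ hc => hc.1
  obtain ⟨m, hmb, hm⟩ :=
    (hAl.image (· ∘ Fin.castSucc)).isPWO.exists_le_minimal ⟨b, ⟨hb, hbl⟩, rfl⟩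
  obtain ⟨s, ⟨hsAl, hsm⟩, hs⟩ :=
    Set.exists_min_image {c ∈ Al | c ∘ Fin.castSucc = m} (· (Fin.last k))
      (hAl.subset fun _ hc => hc.1) hm.prop
  refine ⟨s, ⟨hsAl, hsm ▸ mem_paretoMin_iff_minimal.2 hm, ?_⟩, hsm ▸ hmb, ?_⟩
  · exact fun c hc hcs => hs c ⟨hc, hcs.trans hsm⟩
  · exact fun hsb => hs b ⟨⟨hb, hbl⟩, hsb.symm.trans hsm⟩

/-- Key feature of CLMOIP: if `A` is finite and `M` is an upper bound on the last objective
value amongst all CLMOIP solutions with bound `l`, then every Pareto-minimal element `v`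
of `A` with `M ≤ v_last ≤ l` belongs to the CLMOIP solution set.  This justifies replacing
the bound `l` by `M - 1` in subsequent runs. -/
theorem clmoip_captures_range {k : ℕ} (A : Set (Fin (k + 1) → ℤ)) (hA : A.Finite)
    (l M : ℤ) (hM : ∀ s ∈ clmoipSol A l, s (Fin.last k) ≤ M)
    (v : Fin (k + 1) → ℤ) (hv : v ∈ paretoMin A)
    (hMv : M ≤ v (Fin.last k)) (hvl : v (Fin.last k) ≤ l) :
    v ∈ clmoipSol A l := by
  have hv_min := mem_paretoMin_iff_minimal.1 hv
  have hvAl : v ∈ {b ∈ A | b (Fin.last k) ≤ l} := ⟨hv_min.prop, hvl⟩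
  have below_v : ∀ b ∈ {b ∈ A | b (Fin.last k) ≤ l}, b ∘ Fin.castSucc ≤ v ∘ Fin.castSucc →
      b ∘ Fin.castSucc = v ∘ Fin.castSucc ∧ v (Fin.last k) ≤ b (Fin.last k) := by
    rintro b ⟨hbA, hbl⟩ hbv
    obtain ⟨s, hs, hsb, hsb_last⟩ := exists_mem_clmoipSol_le hA hbA hbl
    obtain rfl : s = v := hv_min.eq_of_le hs.1.1
      (le_of_comp_castSucc_le_of_last_le (hsb.trans hbv) ((hM s hs).trans hMv))
    have hbs : b ∘ Fin.castSucc = s ∘ Fin.castSucc := le_antisymm hbv hsb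
    exact ⟨hbs, hsb_last hbs.symm⟩
  refine ⟨hvAl, mem_paretoMin_iff_minimal.2 ⟨⟨v, hvAl, rfl⟩, ?_⟩,
    fun b hb hbv => (below_v b hb hbv.le).2⟩
  rintro _ ⟨b, hb, rfl⟩ hbv
  exact (below_v b hb hbv).1.ge
end

section
/- Let A ⊆ (Fin (k+1) → ℤ) be finite, let l ∈ ℤ, and set A_l = {b ∈ A : b (Fin.last k) ≤ l}, assumed nonempty. Let N_l denote the set of Pareto-minimal elements of A_l and let M ∈ ℤ be the maximum of a (Fin.last k) over a ∈ N_l (i.e., a (Fin.last k) ≤ M for all a ∈ N_l, with equality attained by some a ∈ N_l). Let N_{M−1} denote the set of Pareto-minimal elements of {b ∈ A : b (Fin.last k) ≤ M − 1}. Then N_l is the disjoint union of N_{M−1} and {a ∈ N_l : a (Fin.last k) = M}. -/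
section

variable {k : ℕ}

lemma paretoMin_inter_of_isLowerSet (A : Set (Fin k → ℤ)) {L : Set (Fin k → ℤ)}
    (hL : IsLowerSet L) : paretoMin (A ∩ L) = paretoMin A ∩ L := by
  ext a
  constructor
  · rintro ⟨⟨haA, haL⟩, hmin⟩
    exact ⟨⟨haA, fun b hbA hba => hmin b ⟨hbA, hL hba.le haL⟩ hba⟩, haL⟩
  · rintro ⟨⟨haA, hmin⟩, haL⟩
    exact ⟨⟨haA, haL⟩, fun b hb => hmin b hb.1⟩

lemma isLowerSet_setOf_apply_le (i : Fin k) (c : ℤ) : IsLowerSet {b : Fin k → ℤ | b i ≤ c} :=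
  (isLowerSet_Iic c).preimage (Function.monotone_eval i)

lemma paretoMin_sep_apply_le_of_le (A : Set (Fin k → ℤ)) (i : Fin k) {c d : ℤ} (hcd : c ≤ d) :
    paretoMin {b ∈ A | b i ≤ c} = paretoMin {b ∈ A | b i ≤ d} ∩ {b | b i ≤ c} := by
  have hsep : {b ∈ A | b i ≤ c} = {b ∈ A | b i ≤ d} ∩ {b | b i ≤ c} := by
    ext b
    exact ⟨fun ⟨hbA, hbc⟩ => ⟨⟨hbA, hbc.trans hcd⟩, hbc⟩, fun ⟨⟨hbA, _⟩, hbc⟩ => ⟨hbA, hbc⟩⟩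
  rw [hsep, paretoMin_inter_of_isLowerSet _ (isLowerSet_setOf_apply_le i c)]

end

theorem paretoMin_decomposition_general {k : ℕ} (A : Set (Fin (k + 1) → ℤ))
    (l M : ℤ)
    (hub : ∀ a ∈ paretoMin {b ∈ A | b (Fin.last k) ≤ l}, a (Fin.last k) ≤ M)
    (hatt : ∃ a ∈ paretoMin {b ∈ A | b (Fin.last k) ≤ l}, a (Fin.last k) = M) :
    paretoMin {b ∈ A | b (Fin.last k) ≤ l} =
      paretoMin {b ∈ A | b (Fin.last k) ≤ M - 1} ∪
        {a ∈ paretoMin {b ∈ A | b (Fin.last k) ≤ l} | a (Fin.last k) = M} ∧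
    Disjoint (paretoMin {b ∈ A | b (Fin.last k) ≤ M - 1})
      {a ∈ paretoMin {b ∈ A | b (Fin.last k) ≤ l} | a (Fin.last k) = M} := by
  have hMl : M - 1 ≤ l := by
    obtain ⟨a, ha, rfl⟩ := hatt
    linarith [ha.1.2]
  rw [paretoMin_sep_apply_le_of_le A (Fin.last k) hMl]
  refine ⟨?_, Set.disjoint_left.2 fun a ⟨_, (haM : a (Fin.last k) ≤ M - 1)⟩ ⟨_, haM'⟩ => by omega⟩
  ext a
  refine ⟨fun ha => ?_, fun ha => ha.elim (·.1) (·.1)⟩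
  by_cases haM : a (Fin.last k) = M
  · exact .inr ⟨ha, haM⟩
  · exact .inl ⟨ha, show a (Fin.last k) ≤ M - 1 by have := hub a ha; omega⟩

/-- The decomposition underlying the iteration of the recursive algorithm: if `A` is
finite, `A_l = {b ∈ A | b_last ≤ l}` is nonempty, `N_l` is its nondominated set and `M` is
the maximum of the last objective value over `N_l`, then `N_l` is the disjoint union of
`N_{M-1}` (the nondominated set of `{b ∈ A | b_last ≤ M - 1}`) and
`{a ∈ N_l | a_last = M}`.  Hence lowering the bound to `M - 1` loses no nondominated
vectors. -/
theorem paretoMin_decomposition {k : ℕ} (A : Set (Fin (k + 1) → ℤ)) (hA : A.Finite)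
    (l M : ℤ) (hne : {b ∈ A | b (Fin.last k) ≤ l}.Nonempty)
    (hub : ∀ a ∈ paretoMin {b ∈ A | b (Fin.last k) ≤ l}, a (Fin.last k) ≤ M)
    (hatt : ∃ a ∈ paretoMin {b ∈ A | b (Fin.last k) ≤ l}, a (Fin.last k) = M) :
    paretoMin {b ∈ A | b (Fin.last k) ≤ l} =
      paretoMin {b ∈ A | b (Fin.last k) ≤ M - 1} ∪
        {a ∈ paretoMin {b ∈ A | b (Fin.last k) ≤ l} | a (Fin.last k) = M} ∧
    Disjoint (paretoMin {b ∈ A | b (Fin.last k) ≤ M - 1})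
      {a ∈ paretoMin {b ∈ A | b (Fin.last k) ≤ l} | a (Fin.last k) = M} :=
  paretoMin_decomposition_general A l M hub hatt
end
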